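/- For every A ∈ 𝒱 and closed proof t of A, t ⊞ (−t) ≡ 0_A, where the additive inverse −t is defined by: if A = ⊤, t reduces to a.⋆ and −t = (−a).⋆; if A = A₁∧A₂, t reduces to ⟨t₁,t₂⟩ and −t = ⟨−t₁,−t₂⟩. -/

import Mathlib

set_option autoImplicit true
set_option maxHeartbeats 1000000

namespace LS

/-- Propositions of the L^S-logic. -/
inductive Prp where
  | top | bot
  | imp (A B : Prp) | conj (A B : Prp) | disj (A B : Prp)
deriving DecidableEq

/-- Proof-terms of the L^S-calculus over a type of scalars `S`. -/
inductive Tm (S : Type) where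
  | var (x : ℕ)
  | sum (t u : Tm S)
  | scal (a : S) (t : Tm S)
  | star (a : S)
  | elimTop (t u : Tm S)
  | elimBot (t : Tm S)
  | lam (x : ℕ) (t : Tm S)
  | app (t u : Tm S)
  | pair (t u : Tm S)
  | elimConj1 (t : Tm S) (x : ℕ) (u : Tm S)
  | elimConj2 (t : Tm S) (x : ℕ) (u : Tm S)
  | inl (t : Tm S) | inr (t : Tm S)
  | elimDisj (t : Tm S) (x : ℕ) (u : Tm S) (y : ℕ) (v : Tm S)

namespace Tm

variable {S : Type}

/-- Free variables. -/
def fv : Tm S → Finset ℕ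
  | .var x => {x}
  | .sum t u => fv t ∪ fv u
  | .scal _ t => fv t
  | .star _ => ∅
  | .elimTop t u => fv t ∪ fv u
  | .elimBot t => fv t
  | .lam x t => fv t \ {x}
  | .app t u => fv t ∪ fv u
  | .pair t u => fv t ∪ fv u
  | .elimConj1 t x u => fv t ∪ (fv u \ {x})
  | .elimConj2 t x u => fv t ∪ (fv u \ {x})
  | .inl t => fv t
  | .inr t => fv t
  | .elimDisj t x u y v => fv t ∪ (fv u \ {x}) ∪ (fv v \ {y})

/-- Substitution `(u/x)t`. -/
def subst (u : Tm S) (x : ℕ) : Tm S → Tm S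
  | .var y => if y = x then u else .var y
  | .sum t₁ t₂ => .sum (subst u x t₁) (subst u x t₂)
  | .scal a t => .scal a (subst u x t)
  | .star a => .star a
  | .elimTop t₁ t₂ => .elimTop (subst u x t₁) (subst u x t₂)
  | .elimBot t => .elimBot (subst u x t)
  | .lam y t => if y = x then .lam y t else .lam y (subst u x t)
  | .app t₁ t₂ => .app (subst u x t₁) (subst u x t₂)
  | .pair t₁ t₂ => .pair (subst u x t₁) (subst u x t₂)
  | .elimConj1 t y r => .elimConj1 (subst u x t) y (if y = x then r else subst u x r)
  | .elimConj2 t y r => .elimConj2 (subst u x t) y (if y = x then r else subst u x r)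
  | .inl t => .inl (subst u x t)
  | .inr t => .inr (subst u x t)
  | .elimDisj t y r z s =>
      .elimDisj (subst u x t) y (if y = x then r else subst u x r)
        z (if z = x then s else subst u x s)

end Tm

/-- Linear typing contexts: multisets of named hypotheses (exchange is built in). -/
abbrev Ctx : Type := Multiset (ℕ × Prp)

/-- The linear typing judgment of the L^S-calculus. -/
inductive Types {S : Type} : Ctx → Tm S → Prp → Prop
  | ax (x : ℕ) (A : Prp) : Types {(x, A)} (.var x) A
  | sum : Types Γ t A → Types Γ u A → Types Γ (.sum t u) A
  | scal (a : S) : Types Γ t A → Types Γ (.scal a t) A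
  | star (a : S) : Types 0 (.star a) .top
  | elimTop : Types Γ t .top → Types Δ u A → Types (Γ + Δ) (.elimTop t u) A
  | elimBot : Types Γ t .bot → Types (Γ + Δ) (.elimBot t) C
  | lam : Types ((x, A) ::ₘ Γ) t B → Types Γ (.lam x t) (.imp A B)
  | app : Types Γ t (.imp A B) → Types Δ u A → Types (Γ + Δ) (.app t u) B
  | pair : Types Γ t A → Types Γ u B → Types Γ (.pair t u) (.conj A B)
  | elimConj1 : Types Γ t (.conj A B) → Types ((x, A) ::ₘ Δ) u C →
      Types (Γ + Δ) (.elimConj1 t x u) C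
  | elimConj2 : Types Γ t (.conj A B) → Types ((x, B) ::ₘ Δ) u C →
      Types (Γ + Δ) (.elimConj2 t x u) C
  | inl : Types Γ t A → Types Γ (.inl t) (.disj A B)
  | inr : Types Γ t B → Types Γ (.inr t) (.disj A B)
  | elimDisj : Types Γ t (.disj A B) → Types ((x, A) ::ₘ Δ) u C →
      Types ((y, B) ::ₘ Δ) v C → Types (Γ + Δ) (.elimDisj t x u y v) C

variable {S : Type} [Field S]

/-- One-step reduction of the L^S-calculus (root rules plus congruence). -/
inductive Red : Tm S → Tm S → Prop
  | elimTopStar : Red (.elimTop (.star a) t) (.scal a t)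
  | beta : Red (.app (.lam x t) u) (Tm.subst u x t)
  | elimConj1Pair : Red (.elimConj1 (.pair t u) x v) (Tm.subst t x v)
  | elimConj2Pair : Red (.elimConj2 (.pair t u) x v) (Tm.subst u x v)
  | elimDisjInl : Red (.elimDisj (.inl t) x v y w) (Tm.subst t x v)
  | elimDisjInr : Red (.elimDisj (.inr u) x v y w) (Tm.subst u y w)
  | sumStar : Red (.sum (.star a) (.star b)) (.star (a + b))
  | sumLam : Red (.sum (.lam x t) (.lam x u)) (.lam x (.sum t u))
  | sumPair : Red (.sum (.pair t u) (.pair v w)) (.pair (.sum t v) (.sum u w))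
  | elimDisjSum : Red (.elimDisj (.sum t u) x v y w)
      (.sum (.elimDisj t x v y w) (.elimDisj u x v y w))
  | scalStar : Red (.scal a (.star b)) (.star (a * b))
  | scalLam : Red (.scal a (.lam x t)) (.lam x (.scal a t))
  | scalPair : Red (.scal a (.pair t u)) (.pair (.scal a t) (.scal a u))
  | elimDisjScal : Red (.elimDisj (.scal a t) x v y w) (.scal a (.elimDisj t x v y w))
  -- congruence rules
  | sumL : Red t t' → Red (.sum t u) (.sum t' u)
  | sumR : Red u u' → Red (.sum t u) (.sum t u')
  | scalC : Red t t' → Red (.scal a t) (.scal a t')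
  | elimTopL : Red t t' → Red (.elimTop t u) (.elimTop t' u)
  | elimTopR : Red u u' → Red (.elimTop t u) (.elimTop t u')
  | elimBotC : Red t t' → Red (.elimBot t) (.elimBot t')
  | lamC : Red t t' → Red (.lam x t) (.lam x t')
  | appL : Red t t' → Red (.app t u) (.app t' u)
  | appR : Red u u' → Red (.app t u) (.app t u')
  | pairL : Red t t' → Red (.pair t u) (.pair t' u)
  | pairR : Red u u' → Red (.pair t u) (.pair t u')
  | elimConj1L : Red t t' → Red (.elimConj1 t x u) (.elimConj1 t' x u)
  | elimConj1R : Red u u' → Red (.elimConj1 t x u) (.elimConj1 t x u')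
  | elimConj2L : Red t t' → Red (.elimConj2 t x u) (.elimConj2 t' x u)
  | elimConj2R : Red u u' → Red (.elimConj2 t x u) (.elimConj2 t x u')
  | inlC : Red t t' → Red (.inl t) (.inl t')
  | inrC : Red t t' → Red (.inr t) (.inr t')
  | elimDisjL : Red t t' → Red (.elimDisj t x u y v) (.elimDisj t' x u y v)
  | elimDisjM : Red u u' → Red (.elimDisj t x u y v) (.elimDisj t x u' y v)
  | elimDisjR : Red v v' → Red (.elimDisj t x u y v) (.elimDisj t x u y v')

/-- Multi-step reduction. -/
abbrev Reds : Tm S → Tm S → Prop := Relation.ReflTransGen Red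

/-- Convertibility: the reflexive-symmetric-transitive closure of reduction. -/
abbrev Conv : Tm S → Tm S → Prop := Relation.EqvGen Red

/-- A proof-term is irreducible when no reduction applies (congruence included). -/
def Irreducible (t : Tm S) : Prop := ∀ u, ¬ Red t u

/-- A proof-term is closed when it has no free variables. -/
def Closed (t : Tm S) : Prop := t.fv = ∅

/-- The set 𝒱 of propositions generated by ⊤ and closed under ∧. -/
inductive InV : Prp → Prop
  | top : InV .top
  | conj : InV A → InV B → InV (.conj A B)

/-- Dimension of a proposition of 𝒱 (number of occurrences of ⊤). -/
def dim : Prp → ℕ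
  | .top => 1
  | .conj A B => dim A + dim B
  | _ => 0

/-- The zero vector proof 0_A of a proposition A ∈ 𝒱. -/
def zeroPf (S : Type) [Field S] : Prp → Tm S
  | .conj A B => .pair (zeroPf S A) (zeroPf S B)
  | _ => .star 0

/-- `NegOf A t n` : `n` is the additive inverse −t of the closed proof `t` of `A ∈ 𝒱`. -/
inductive NegOf : Prp → Tm S → Tm S → Prop
  | top : Reds t (.star a) → NegOf .top t (.star (-a))
  | conj : Reds t (.pair t₁ t₂) → NegOf A t₁ n₁ → NegOf B t₂ n₂ →
      NegOf (.conj A B) t (.pair n₁ n₂)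

/-- Denotation of irreducible proofs of propositions of 𝒱 as vectors (lists of scalars). -/
inductive Denotes : Tm S → List S → Prop
  | star (a : S) : Denotes (.star a) [a]
  | pair : Denotes t xs → Denotes u ys → Denotes (.pair t u) (xs ++ ys)

/-- `Den t xs` : the closed proof `t` denotes the vector `xs` (via its irreducible form). -/
def Den (t : Tm S) (xs : List S) : Prop := ∃ t', Reds t t' ∧ Denotes t' xs

/-- The canonical (irreducible) proof of `A ∈ 𝒱` denoting a given vector. -/
def canon : Prp → List S → Tm S
  | .conj A B, l => .pair (canon A (l.take (dim A))) (canon B (l.drop (dim A)))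
  | _, l => .star (l.headD 0)

/-- The size function μ on proof-terms. -/
def mu : Tm S → ℕ
  | .var _ => 0
  | .sum t u => 1 + max (mu t) (mu u)
  | .scal _ t => 1 + mu t
  | .star _ => 1
  | .elimTop t u => 1 + mu t + mu u
  | .elimBot t => 1 + mu t
  | .lam _ t => 1 + mu t
  | .app t u => 1 + mu t + mu u
  | .pair t u => 1 + max (mu t) (mu u)
  | .elimConj1 t _ u => 1 + mu t + mu u
  | .elimConj2 t _ u => 1 + mu t + mu u
  | .inl t => 1 + mu t
  | .inr t => 1 + mu t
  | .elimDisj t _ u _ v => 1 + mu t + max (mu u) (mu v)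

/-- Elimination contexts. -/
inductive ECtx (S : Type) where
  | hole
  | elimTop (K : ECtx S) (u : Tm S)
  | elimBot (K : ECtx S)
  | app (K : ECtx S) (t : Tm S)
  | elimConj1 (K : ECtx S) (x : ℕ) (r : Tm S)
  | elimConj2 (K : ECtx S) (x : ℕ) (r : Tm S)
  | elimDisj (K : ECtx S) (x : ℕ) (r : Tm S) (y : ℕ) (s : Tm S)

namespace ECtx

/-- Plugging a proof-term into the hole of an elimination context. -/
def fill : ECtx S → Tm S → Tm S
  | .hole, t => t
  | .elimTop K u, t => .elimTop (fill K t) u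
  | .elimBot K, t => .elimBot (fill K t)
  | .app K s, t => .app (fill K t) s
  | .elimConj1 K x r, t => .elimConj1 (fill K t) x r
  | .elimConj2 K x r, t => .elimConj2 (fill K t) x r
  | .elimDisj K x r y s, t => .elimDisj (fill K t) x r y s

/-- Well-formedness side conditions of an elimination context. -/
def WF : ECtx S → Prop
  | .hole => True
  | .elimTop K u => WF K ∧ Closed u
  | .elimBot K => WF K
  | .app K s => WF K ∧ Closed s
  | .elimConj1 K x r => WF K ∧ r.fv ⊆ {x}
  | .elimConj2 K x r => WF K ∧ r.fv ⊆ {x}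
  | .elimDisj K x r y s => WF K ∧ r.fv ⊆ {x} ∧ s.fv ⊆ {y}

/-- The size μ of an elimination context (the hole counting 0). -/
def muE : ECtx S → ℕ
  | .hole => 0
  | .elimTop K u => 1 + muE K + mu u
  | .elimBot K => 1 + muE K
  | .app K s => 1 + muE K + mu s
  | .elimConj1 K _ r => 1 + muE K + mu r
  | .elimConj2 K _ r => 1 + muE K + mu r
  | .elimDisj K _ r _ s => 1 + muE K + max (mu r) (mu s)

end ECtx

/-- Typing of elimination contexts: `ETypes B K A` means `_:B ⊢ K : A`. -/
inductive ETypes : Prp → ECtx S → Prp → Prop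
  | hole : ETypes B .hole B
  | elimTop : ETypes B K .top → Types 0 u A → ETypes B (.elimTop K u) A
  | elimBot : ETypes B K .bot → ETypes B (.elimBot K) C
  | app : ETypes B K (.imp D A) → Types 0 s D → ETypes B (.app K s) A
  | elimConj1 : ETypes B K (.conj D E) → Types {(x, D)} r C → ETypes B (.elimConj1 K x r) C
  | elimConj2 : ETypes B K (.conj D E) → Types {(x, E)} r C → ETypes B (.elimConj2 K x r) C
  | elimDisj : ETypes B K (.disj D E) → Types {(x, D)} r C → Types {(y, E)} s C →
      ETypes B (.elimDisj K x r y s) C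

/-- A proof-term is an introduction. -/
def IsIntro : Tm S → Prop
  | .star _ => True
  | .lam _ _ => True
  | .pair _ _ => True
  | .inl _ => True
  | .inr _ => True
  | _ => False

end LS

/-! At `⊤`, `t ⊞ (−t)` reduces to `(a + −a).⋆ = 0.⋆`; at `A₁ ∧ A₂`, the rule
`⟨t₁, t₂⟩ ⊞ ⟨n₁, n₂⟩ ↦ ⟨t₁ ⊞ n₁, t₂ ⊞ n₂⟩` reduces the claim to the two components. -/

theorem Relation.EqvGen.lift {α β : Type*} {r : α → α → Prop} {p : β → β → Prop} (f : α → β)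
    (h : ∀ a b, r a b → p (f a) (f b)) {a b : α} (hab : EqvGen r a b) :
    EqvGen p (f a) (f b) := by
  induction hab with
  | rel a b hab => exact .rel _ _ (h a b hab)
  | refl => exact .refl _
  | symm _ _ _ ih => exact .symm _ _ ih
  | trans _ _ _ _ _ ih₁ ih₂ => exact .trans _ _ _ ih₁ ih₂

namespace LS

variable {S : Type} [Field S]

theorem reds_sum_left {t t' u : Tm S} (h : Reds t t') : Reds (.sum t u) (.sum t' u) :=
  h.lift (Tm.sum · u) fun _ _ => Red.sumL

theorem conv_pair {t t' u u' : Tm S} (ht : Conv t t') (hu : Conv u u') :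
    Conv (.pair t u) (.pair t' u') :=
  .trans _ _ _ (ht.lift (Tm.pair · u) fun _ _ => Red.pairL)
    (hu.lift (Tm.pair t') fun _ _ => Red.pairR)

theorem red_sum_star_neg (a : S) : Red (.sum (.star a) (.star (-a))) (.star 0) := by
  simpa using (Red.sumStar : Red (.sum (.star a) (.star (-a))) (.star (a + -a)))

end LS

theorem LS.sum_neg_conv_general {S : Type} [Field S] {A : LS.Prp}
    {t n : LS.Tm S} (hn : LS.NegOf A t n) :
    LS.Conv (.sum t n) (LS.zeroPf S A) := by
  induction hn with
  | @top t a h =>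
      exact Relation.EqvGen.reflTransGen_le_eqvGen _ _ _
        ((LS.reds_sum_left h).tail (LS.red_sum_star_neg a))
  | @conj t t₁ t₂ A n₁ B n₂ h _ _ ih₁ ih₂ =>
      have hpair : LS.Reds (.sum t (.pair n₁ n₂)) (.pair (.sum t₁ n₁) (.sum t₂ n₂)) :=
        (LS.reds_sum_left h).tail .sumPair
      exact .trans _ _ _ (Relation.EqvGen.reflTransGen_le_eqvGen _ _ _ hpair)
        (LS.conv_pair ih₁ ih₂)

/-- The additive inverse: t ⊞ (−t) ≡ 0_A, for closed proofs of A ∈ 𝒱. -/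
theorem LS.sum_neg_conv {S : Type} [Field S] {A : LS.Prp} (hA : LS.InV A)
    {t n : LS.Tm S} (ht : LS.Types 0 t A) (hn : LS.NegOf A t n) :
    LS.Conv (.sum t n) (LS.zeroPf S A) :=
  LS.sum_neg_conv_general hn
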